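/- arXiv:2502.02937 — 4 statements merged into one kernel-verified Lean document; each statement's English description precedes it below -/
import Mathlib

section
/- Let R be a commutative unital ring, I an ideal of R, and M an R-module that is both injective and I-reduced. Then the ideal transform D_I(M) := colim_k Hom_R(I^k, M) (the direct limit over k ≥ 1 along the restriction maps induced by the inclusions I^{k+1} ⊆ I^k) is isomorphic to Hom_R(I, M); equivalently, D_I(M) ≅ M/(0 :_M I). -/
/-!
Injectivity of `M` (Baer's criterion) makes every `R`-linear map `I^a → M` multiplication by
some `m ∈ M` and makes every restriction map `Hom(I^a, M) → Hom(I^b, M)` surjective. If such a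
restriction kills `x ↦ x • m`, then `I^b m = 0`, and `I`-reducedness propagates this down to
`I m = 0`, so the map was zero. Hence all transition maps are isomorphisms and the direct limit is
its first term `Hom(I, M)`.
-/

universe u v

open Module

/-- The directed system `k ↦ Hom_R(I^(k+1), M)` with the restriction maps induced by
the inclusions `I^(l+1) ⊆ I^(k+1)` for `k ≤ l`. -/
noncomputable def homPowDiagram (R : Type u) [CommRing R] (I : Ideal R) (M : Type u)
    [AddCommGroup M] [Module R M] :
    ∀ k l : ℕ, k ≤ l → (↥(I ^ (k + 1)) →ₗ[R] M) →ₗ[R] (↥(I ^ (l + 1)) →ₗ[R] M) :=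
  fun _ _ h =>
    LinearMap.lcomp R M (Submodule.inclusion (Ideal.pow_le_pow_right (by omega)))

/-- The ideal transform `D_I(M) = colim_{k ≥ 1} Hom_R(I^k, M)`. -/
noncomputable abbrev idealTransform (R : Type u) [CommRing R] (I : Ideal R) (M : Type u)
    [AddCommGroup M] [Module R M] : Type u :=
  Module.DirectLimit (fun k : ℕ => ↥(I ^ (k + 1)) →ₗ[R] M) (homPowDiagram R I M)

theorem Module.DirectLimit.of_bijective_of_isBot {R ι : Type*} [Semiring R] [Preorder ι]
    [IsDirectedOrder ι] [DecidableEq ι] {G : ι → Type*} [∀ i, AddCommMonoid (G i)]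
    [∀ i, Module R (G i)]
    {f : ∀ i j, i ≤ j → G i →ₗ[R] G j} [DirectedSystem G (f · · ·)] {i : ι} (hi : IsBot i)
    (hf : ∀ j (h : i ≤ j), Function.Bijective (f i j h)) :
    Function.Bijective (of R ι G f i) := by
  have : Nonempty ι := ⟨i⟩
  refine ⟨fun x y hxy => ?_, fun z => ?_⟩
  · obtain ⟨j, hij, hxy⟩ := exists_eq_of_of_eq hxy
    exact (hf j hij).1 hxy
  · obtain ⟨j, y, rfl⟩ := exists_of z
    obtain ⟨x, rfl⟩ := (hf j (hi j)).2 y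
    exact ⟨x, of_f.symm⟩

theorem Module.Baer.exists_smul_eq {R M : Type*} [Ring R] [AddCommGroup M] [Module R M]
    (hM : Module.Baer R M) (J : Ideal R) (g : J →ₗ[R] M) :
    ∃ m : M, ∀ x : J, g x = (x : R) • m := by
  obtain ⟨g', hg'⟩ := hM J g
  refine ⟨g' 1, fun x => ?_⟩
  rw [← hg' x x.2, ← map_smul, smul_eq_mul, mul_one]

theorem LinearMap.lcomp_surjective_of_injective {R : Type*} {M : Type v} [CommRing R]
    [AddCommGroup M] [Module R M] [Small.{v} R] [Module.Injective R M] {N P : Type*}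
    [AddCommGroup N] [Module R N] [AddCommGroup P] [Module R P] (i : N →ₗ[R] P) (hi : Function.Injective i) :
    Function.Surjective (LinearMap.lcomp R M i) := fun g =>
  Module.Injective.extension_property R M N P i hi g

section IdealTransform

variable {R : Type u} [CommRing R] {I : Ideal R} {M : Type u} [AddCommGroup M] [Module R M]

instance homPowDiagram.directedSystem :
    DirectedSystem (fun k : ℕ => ↥(I ^ (k + 1)) →ₗ[R] M) (homPowDiagram R I M · · ·) where
  map_self _ _ := rfl
  map_map _ _ _ _ _ _ := rfl

theorem smul_eq_zero_of_pow_succ_smul_eq_zero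
    (hred : ∀ m : M, (∀ r ∈ I ^ 2, r • m = 0) → ∀ r ∈ I, r • m = 0) (k : ℕ) (m : M)
    (hm : ∀ r ∈ I ^ (k + 1), r • m = 0) : ∀ r ∈ I, r • m = 0 := by
  induction k generalizing m with
  | zero => simpa using hm
  | succ k ih =>
    -- for `b ∈ I` we get `I^(k+1) (b m) = 0`, hence `I (b m) = 0` by induction, i.e. `I² m = 0`
    refine hred m fun r hr => ?_
    rw [pow_two] at hr
    refine Submodule.mul_induction_on hr (fun a ha b hb => ?_)
      (fun x y hx hy => by rw [add_smul, hx, hy, add_zero])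
    have hbm : ∀ s ∈ I ^ (k + 1), s • b • m = 0 := fun s hs => by
      rw [smul_smul]
      exact hm _ (pow_succ I (k + 1) ▸ Ideal.mul_mem_mul hs hb)
    rw [mul_smul, ih (b • m) hbm a ha]

theorem homPowDiagram_injective (hinj : Module.Injective R M)
    (hred : ∀ m : M, (∀ r ∈ I ^ 2, r • m = 0) → ∀ r ∈ I, r • m = 0) (k l : ℕ) (h : k ≤ l) :
    Function.Injective (homPowDiagram R I M k l h) := by
  refine (injective_iff_map_eq_zero _).2 fun g hg => ?_
  obtain ⟨m, hgm⟩ := (Module.Baer.of_injective hinj).exists_smul_eq _ g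
  have hIm : ∀ r ∈ I, r • m = 0 := smul_eq_zero_of_pow_succ_smul_eq_zero hred l m
    fun r hr => (hgm ⟨r, Ideal.pow_le_pow_right (by omega) hr⟩).symm.trans
      (LinearMap.congr_fun hg ⟨r, hr⟩)
  ext x
  rw [hgm, hIm x (Ideal.pow_le_self k.succ_ne_zero x.2), LinearMap.zero_apply]

theorem homPowDiagram_surjective (hinj : Module.Injective R M) (k l : ℕ) (h : k ≤ l) :
    Function.Surjective (homPowDiagram R I M k l h) := by
  have := hinj
  exact LinearMap.lcomp_surjective_of_injective _ (Submodule.inclusion_injective _)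

theorem homPowDiagram_bijective (hinj : Module.Injective R M)
    (hred : ∀ m : M, (∀ r ∈ I ^ 2, r • m = 0) → ∀ r ∈ I, r • m = 0) (k l : ℕ) (h : k ≤ l) :
    Function.Bijective (homPowDiagram R I M k l h) :=
  ⟨homPowDiagram_injective hinj hred k l h, homPowDiagram_surjective hinj k l h⟩

end IdealTransform

theorem stmt1 (R : Type u) [CommRing R] (I : Ideal R) (M : Type u) [AddCommGroup M]
    [Module R M] (hinj : Module.Injective R M)
    (hred : ∀ m : M, (∀ r ∈ I ^ 2, r • m = 0) → ∀ r ∈ I, r • m = 0) :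
    Nonempty (idealTransform R I M ≃ₗ[R] (↥I →ₗ[R] M)) := by
  have hbij := Module.DirectLimit.of_bijective_of_isBot (f := homPowDiagram R I M)
    (fun j => Nat.zero_le j) (homPowDiagram_bijective hinj hred 0)
  exact ⟨(LinearEquiv.ofBijective _ hbij).symm.trans <|
    LinearEquiv.arrowCongr (LinearEquiv.ofEq _ _ (pow_one I)) (LinearEquiv.refl R M)⟩
end

section
/- Let R be a commutative unital ring and I an ideal of R such that every R-module is I-reduced. Then for every R-module M and every i ≥ 0, the local cohomology module H_I^i(M) is isomorphic to Ext_R^i(R/I, M). -/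
/-!
Applying reducedness to the class of `1` in `R ⧸ I ^ 2` shows `I ^ 2 = I`, so every power `I ^ k`
with `k ≥ 1` equals `I`. The directed system `Ext^i(R ⧸ I ^ k, -)` defining `H_I^i` is then
constant from `k = 1` on, and its colimit is `Ext^i(R ⧸ I, -)`.
-/

universe u

open CategoryTheory Opposite Limits

theorem Ideal.isIdempotentElem_of_forall_reduced {R : Type u} [CommRing R] {I : Ideal R}
    (hred : ∀ (N : Type u) [AddCommGroup N] [Module R N],
      ∀ m : N, (∀ r ∈ I ^ 2, r • m = 0) → ∀ r ∈ I, r • m = 0) :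
    IsIdempotentElem I := by
  have hmk (r : R) : r • (Submodule.Quotient.mk 1 : R ⧸ I ^ 2) = 0 ↔ r ∈ I ^ 2 := by
    rw [← Submodule.Quotient.mk_smul, smul_eq_mul, mul_one, Submodule.Quotient.mk_eq_zero]
  refine (pow_two I ▸ Ideal.pow_le_self two_ne_zero).antisymm fun r hr => ?_
  rw [← pow_two, ← hmk]
  exact hred _ _ (fun s hs => (hmk s).2 hs) r hr

namespace localCohomology

variable {R : Type u} [CommRing R] {D : Type*} [SmallCategory D]

theorem ringModIdeals_map_isIso (I : D ⥤ Ideal R) {a b : D} (f : a ⟶ b)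
    (h : I.obj b ≤ I.obj a) : IsIso ((ringModIdeals I).map f) :=
  ⟨ModuleCat.ofHom (Submodule.mapQ _ _ LinearMap.id h), by
    constructor <;> · ext1; apply Submodule.linearMap_qext; rfl⟩

theorem diagram_isEventuallyConstantFrom (I : D ⥤ Ideal R) (i : ℕ) {a : D}
    (h : ∀ ⦃b : D⦄, (b ⟶ a) → I.obj a ≤ I.obj b) :
    (diagram I i).IsEventuallyConstantFrom (op a) := fun _ f =>
  have := ringModIdeals_map_isIso I f.unop (h f.unop)
  inferInstanceAs (IsIso ((Ext R (ModuleCat.{u} R) i).map ((ringModIdeals I).map f.unop).op))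

theorem diagram_idealPowersDiagram_isEventuallyConstantFrom {I : Ideal R}
    (hI : IsIdempotentElem I) (i : ℕ) :
    (diagram (idealPowersDiagram I) i).IsEventuallyConstantFrom (op (op 1)) :=
  diagram_isEventuallyConstantFrom _ i fun _ f =>
    (pow_one I).trans_le (hI.pow_eq (Nat.one_le_iff_ne_zero.1 (leOfHom f.unop))).ge

noncomputable def isoExtOfIsIdempotentElem {I : Ideal R} (hI : IsIdempotentElem I) (i : ℕ) :
    localCohomology I i ≅ (Ext R (ModuleCat.{u} R) i).obj (op (ModuleCat.of R (R ⧸ I))) :=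
  colimit.isoColimitCocone
      ⟨_, (diagram_idealPowersDiagram_isEventuallyConstantFrom hI i).isColimitCocone⟩ ≪≫
    (Ext R (ModuleCat.{u} R) i).mapIso
      (Submodule.quotEquivOfEq _ _ (pow_one I)).toModuleIso.op.symm

end localCohomology

theorem stmt9 (R : Type u) [CommRing R] (I : Ideal R)
    (hred : ∀ (N : Type u) [AddCommGroup N] [Module R N],
      ∀ m : N, (∀ r ∈ I ^ 2, r • m = 0) → ∀ r ∈ I, r • m = 0)
    (M : Type u) [AddCommGroup M] [Module R M] (i : ℕ) :
    Nonempty ((localCohomology I i).obj (ModuleCat.of R M) ≅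
      ((Ext R (ModuleCat.{u} R) i).obj (op (ModuleCat.of R (R ⧸ I)))).obj
        (ModuleCat.of R M)) :=
  ⟨(localCohomology.isoExtOfIsIdempotentElem
    (Ideal.isIdempotentElem_of_forall_reduced hred) i).app _⟩
end

section
/- Let R be a commutative unital ring and I an ideal of R such that every R-module is I-coreduced. Then for every R-module M, the I-adic completion Λ_I(M) = lim_k M/I^k M is isomorphic to R/I ⊗_R M (equivalently, to M/IM), naturally in M; consequently Λ_I is right exact and its i-th left derived functor, the local homology H_i^I(−), is Tor_i^R(R/I, −). -/
/-!
If `I` is idempotent then `I ^ n • M = I • M` for every `n ≥ 1`, so the inverse system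
`M / I ^ n M` is constant from `n = 1` on and `Λ_I(M) = M / I M ≅ R/I ⊗_R M`, naturally in `M`.
Hence `Λ_I` is naturally isomorphic to the right exact functor `R/I ⊗_R −`, whose left derived
functors are `Tor_i^R(R/I, −)`. Idempotence of `I` is coreducedness of the module `R`.
-/

universe u

open CategoryTheory TensorProduct

/-- The `I`-adic completion functor `Λ_I` on the category of `R`-modules. -/
noncomputable def adicCompletionFunctor (R : Type u) [CommRing R] (I : Ideal R) :
    ModuleCat.{u} R ⥤ ModuleCat.{u} R where
  obj M := ModuleCat.of R (AdicCompletion I M)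
  map {M N} f := ModuleCat.ofHom ((AdicCompletion.map I f.hom).restrictScalars R)
  map_id M := by
    refine ModuleCat.hom_ext (LinearMap.ext fun x => ?_)
    show AdicCompletion.map I (LinearMap.id (M := M)) x = x
    rw [AdicCompletion.map_id]
    rfl
  map_comp {M N P} f g := by
    refine ModuleCat.hom_ext (LinearMap.ext fun x => ?_)
    show AdicCompletion.map I (g.hom ∘ₗ f.hom) x =
      AdicCompletion.map I g.hom (AdicCompletion.map I f.hom x)
    rw [AdicCompletion.map_comp_apply]

instance (R : Type u) [CommRing R] (I : Ideal R) : (adicCompletionFunctor R I).Additive where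
  map_add {M N f g} := by
    refine ModuleCat.hom_ext (LinearMap.ext fun x => ?_)
    refine Subtype.ext (funext fun n => ?_)
    obtain ⟨y, hy⟩ := Submodule.Quotient.mk_surjective _ (x.val n)
    show (f + g).hom.reduceModIdeal (I ^ n) (x.val n) =
      f.hom.reduceModIdeal (I ^ n) (x.val n) +
      g.hom.reduceModIdeal (I ^ n) (x.val n)
    rw [← hy]
    rfl

namespace CategoryTheory.NatIso

variable {C D : Type*} [Category C] [Category D] [Abelian C] [HasProjectiveResolutions C]
  [Abelian D]

noncomputable def leftDerived {F G : C ⥤ D} [F.Additive] [G.Additive] (e : F ≅ G) (n : ℕ) :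
    F.leftDerived n ≅ G.leftDerived n where
  hom := NatTrans.leftDerived e.hom n
  inv := NatTrans.leftDerived e.inv n
  hom_inv_id := by rw [← NatTrans.leftDerived_comp, e.hom_inv_id, NatTrans.leftDerived_id]
  inv_hom_id := by rw [← NatTrans.leftDerived_comp, e.inv_hom_id, NatTrans.leftDerived_id]

end CategoryTheory.NatIso

namespace AdicCompletion

variable {R : Type*} [CommRing R] {I : Ideal R} {M : Type*} [AddCommGroup M] [Module R M]

theorem pow_smul_top_eq_of_isIdempotentElem (hI : IsIdempotentElem I) {n : ℕ} (hn : n ≠ 0) :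
    (I ^ n • ⊤ : Submodule R M) = I • ⊤ := by
  rw [hI.pow_eq hn]

theorem isPrecomplete_of_isIdempotentElem (hI : IsIdempotentElem I) : IsPrecomplete I M where
  prec' f hf := ⟨f 1, fun n => by
    rcases eq_or_ne n 0 with rfl | hn
    · rw [SModEq, pow_zero, Ideal.one_eq_top, Submodule.top_smul]
      exact Subsingleton.elim _ _
    · have h1n := hf (Nat.one_le_iff_ne_zero.mpr hn)
      rw [pow_one, ← pow_smul_top_eq_of_isIdempotentElem hI hn] at h1n
      exact h1n.symm⟩

theorem of_surjective_of_isIdempotentElem (hI : IsIdempotentElem I) :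
    Function.Surjective (of I M) :=
  of_surjective_iff.mpr (isPrecomplete_of_isIdempotentElem hI)

theorem of_eq_zero_of_isIdempotentElem (hI : IsIdempotentElem I) {m : M}
    (hm : m ∈ (I • ⊤ : Submodule R M)) : of I M m = 0 := by
  ext n
  rw [of_apply, Submodule.mkQ_apply, val_zero_apply, Submodule.Quotient.mk_eq_zero]
  rcases eq_or_ne n 0 with rfl | hn
  · simp
  · rwa [pow_smul_top_eq_of_isIdempotentElem hI hn]

theorem eval_one_bijective_of_isIdempotentElem (hI : IsIdempotentElem I) :
    Function.Bijective (eval I M 1) := by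
  refine ⟨(injective_iff_map_eq_zero _).mpr fun x hx => ?_, eval_surjective I M 1⟩
  obtain ⟨m, rfl⟩ := of_surjective_of_isIdempotentElem hI x
  rw [eval_of, Submodule.mkQ_apply, Submodule.Quotient.mk_eq_zero, pow_one] at hx
  exact of_eq_zero_of_isIdempotentElem hI hx

variable (M)

noncomputable def equivQuotTensorOfIsIdempotentElem (hI : IsIdempotentElem I) :
    AdicCompletion I M ≃ₗ[R] (R ⧸ I) ⊗[R] M :=
  LinearEquiv.ofBijective (eval I M 1) (eval_one_bijective_of_isIdempotentElem hI) ≪≫ₗ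
    Submodule.quotEquivOfEq _ _ (by rw [pow_one]) ≪≫ₗ (quotTensorEquivQuotSMul M I).symm

variable {M}

theorem equivQuotTensorOfIsIdempotentElem_of (hI : IsIdempotentElem I) (m : M) :
    equivQuotTensorOfIsIdempotentElem M hI (of I M m) = 1 ⊗ₜ m := by
  simp [equivQuotTensorOfIsIdempotentElem, LinearEquiv.ofBijective_apply, eval_of,
    quotTensorEquivQuotSMul_symm_mk]

theorem equivQuotTensorOfIsIdempotentElem_map (hI : IsIdempotentElem I) {N : Type*}
    [AddCommGroup N] [Module R N] (f : M →ₗ[R] N) (x : AdicCompletion I M) :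
    equivQuotTensorOfIsIdempotentElem N hI (map I f x) =
      f.lTensor (R ⧸ I) (equivQuotTensorOfIsIdempotentElem M hI x) := by
  obtain ⟨m, rfl⟩ := of_surjective_of_isIdempotentElem hI x
  rw [map_of, equivQuotTensorOfIsIdempotentElem_of, equivQuotTensorOfIsIdempotentElem_of,
    LinearMap.lTensor_tmul]

theorem map_surjective_of_isIdempotentElem (hI : IsIdempotentElem I) {N : Type*}
    [AddCommGroup N] [Module R N] {f : M →ₗ[R] N} (hf : Function.Surjective f) :
    Function.Surjective (map I f) := by
  have hcomm : equivQuotTensorOfIsIdempotentElem N hI ∘ map I f =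
      f.lTensor (R ⧸ I) ∘ equivQuotTensorOfIsIdempotentElem M hI :=
    funext (equivQuotTensorOfIsIdempotentElem_map hI f)
  refine .of_comp_left ?_ (equivQuotTensorOfIsIdempotentElem N hI).injective
  rw [hcomm]
  exact (f.lTensor_surjective _ hf).comp (equivQuotTensorOfIsIdempotentElem M hI).surjective

theorem map_exact_of_isIdempotentElem (hI : IsIdempotentElem I) {N P : Type*}
    [AddCommGroup N] [Module R N] [AddCommGroup P] [Module R P] {f : M →ₗ[R] N}
    {g : N →ₗ[R] P} (hfg : Function.Exact f g) (hg : Function.Surjective g) :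
    Function.Exact (map I f) (map I g) :=
  (Function.Exact.iff_of_ladder_linearEquiv (f₁₂ := (map I f).restrictScalars R)
    (f₂₃ := (map I g).restrictScalars R)
    (e₁ := equivQuotTensorOfIsIdempotentElem M hI)
    (e₂ := equivQuotTensorOfIsIdempotentElem N hI)
    (e₃ := equivQuotTensorOfIsIdempotentElem P hI)
    (LinearMap.ext fun x => (equivQuotTensorOfIsIdempotentElem_map hI f x).symm)
    (LinearMap.ext fun x => (equivQuotTensorOfIsIdempotentElem_map hI g x).symm)).mp
    (lTensor_exact _ hfg hg)

end AdicCompletion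

noncomputable def adicCompletionFunctorIsoTensoringLeft {R : Type u} [CommRing R] {I : Ideal R}
    (hI : IsIdempotentElem I) :
    adicCompletionFunctor R I ≅
      (MonoidalCategory.tensoringLeft (ModuleCat.{u} R)).obj (ModuleCat.of R (R ⧸ I)) :=
  NatIso.ofComponents
    (fun M => (AdicCompletion.equivQuotTensorOfIsIdempotentElem M hI).toModuleIso)
    fun f => ModuleCat.hom_ext <| LinearMap.ext <|
      AdicCompletion.equivQuotTensorOfIsIdempotentElem_map hI f.hom

theorem stmt12 (R : Type u) [CommRing R] (I : Ideal R)
    (hcor : ∀ (N : Type u) [AddCommGroup N] [Module R N],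
      I ^ 2 • (⊤ : Submodule R N) = I • (⊤ : Submodule R N)) :
    -- (1) `Λ_I(M) ≅ R/I ⊗_R M`, naturally in `M`
    (∃ e : ∀ (M : Type u) [AddCommGroup M] [Module R M],
        AdicCompletion I M ≃ₗ[R] ((R ⧸ I) ⊗[R] M),
      ∀ (M N : Type u) [AddCommGroup M] [Module R M] [AddCommGroup N] [Module R N]
        (f : M →ₗ[R] N) (x : AdicCompletion I M),
          e N (AdicCompletion.map I f x) = LinearMap.lTensor (R ⧸ I) f (e M x)) ∧
    -- (2) `Λ_I` is right exact
    (∀ (A B C : Type u) [AddCommGroup A] [Module R A] [AddCommGroup B] [Module R B]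
        [AddCommGroup C] [Module R C] (f : A →ₗ[R] B) (g : B →ₗ[R] C),
        Function.Exact f g → Function.Surjective g →
          Function.Exact (AdicCompletion.map I f) (AdicCompletion.map I g) ∧
            Function.Surjective (AdicCompletion.map I g)) ∧
    -- (3) the `i`-th left derived functor of `Λ_I` is `Tor_i^R(R/I, −)`
    (∀ i : ℕ, Nonempty ((adicCompletionFunctor R I).leftDerived i ≅
        (Tor (ModuleCat.{u} R) i).obj (ModuleCat.of R (R ⧸ I)))) := by
  have hI : IsIdempotentElem I := by
    have hR := hcor R
    rwa [Ideal.smul_eq_mul, Ideal.smul_eq_mul, Ideal.mul_top, Ideal.mul_top, sq] at hR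
  refine ⟨⟨fun M _ _ => AdicCompletion.equivQuotTensorOfIsIdempotentElem M hI,
      fun M N _ _ _ _ f x => AdicCompletion.equivQuotTensorOfIsIdempotentElem_map hI f x⟩,
    fun A B C _ _ _ _ _ _ f g hfg hg =>
      ⟨AdicCompletion.map_exact_of_isIdempotentElem hI hfg hg,
        AdicCompletion.map_surjective_of_isIdempotentElem hI hg⟩,
    fun i => ⟨NatIso.leftDerived (adicCompletionFunctorIsoTensoringLeft hI) i⟩⟩
end

section
/- Let R be a commutative unital ring and I an ideal of R. The following are equivalent: (1) every R-module is I-reduced; (2) I² = I; (3) every R-module is I-coreduced. -/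
/-!
STATEMENT 13: Let `R` be a commutative unital ring and `I` an ideal of `R`. The following
are equivalent: (1) every `R`-module is `I`-reduced; (2) `I² = I`; (3) every `R`-module is
`I`-coreduced.
-/

universe u

theorem stmt13 (R : Type u) [CommRing R] (I : Ideal R) :
    ((∀ (N : Type u) [AddCommGroup N] [Module R N],
        ∀ m : N, (∀ r ∈ I ^ 2, r • m = 0) → ∀ r ∈ I, r • m = 0) ↔ I ^ 2 = I) ∧
    (I ^ 2 = I ↔
      ∀ (N : Type u) [AddCommGroup N] [Module R N],
        I ^ 2 • (⊤ : Submodule R N) = I • (⊤ : Submodule R N)) := by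
  constructor
  · constructor
    · intro h
      refine le_antisymm (Ideal.pow_le_self two_ne_zero) ?_
      intro r hr
      have key := h (R ⧸ (I ^ 2 : Submodule R R))
        (Submodule.Quotient.mk 1) ?_ r hr
      · rwa [← Submodule.Quotient.mk_smul, smul_eq_mul, mul_one,
          Submodule.Quotient.mk_eq_zero] at key
      · intro s hs
        rw [← Submodule.Quotient.mk_smul, smul_eq_mul, mul_one,
          Submodule.Quotient.mk_eq_zero]
        exact hs
    · intro h N _ _ m hm r hr
      exact hm r (h.ge hr)
  · constructor
    · intro h N _ _
      rw [h]
    · intro h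
      have := h R
      rwa [smul_eq_mul, smul_eq_mul, Ideal.mul_top, Ideal.mul_top] at this
end
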